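/- Let f, g, h be locally integrable complex-valued functions on ℝ, and let a, b, c, d be the entries of M = ψ(f,g,h) (the solution matrix with M′ = mM, M(0) = I, m = ((g/2, h),(−f, −g/2)), det M ≡ 1). Fix y_0 ∈ ℂ such that c(x) y_0 + d(x) ≠ 0 for every x ∈ ℝ. Then y(x) = (a(x) y_0 + b(x)) / (c(x) y_0 + d(x)) is locally absolutely continuous, satisfies y(0) = y_0, and satisfies the Riccati equation y′ = f y² + g y + h almost everywhere on ℝ. -/

import Mathlib

open MeasureTheory intervalIntegral Filter

noncomputable section

/-- Alternating product f(s1)g(s2)f(s3)⋯ with j factors (index 0 ↦ f). -/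
def altProd (f g : ℝ → ℂ) (j : ℕ) (s : Fin j → ℝ) : ℂ :=
  ∏ i : Fin j, if (i : ℕ) % 2 = 0 then f (s i) else g (s i)

/-- The signed simplex integral A_j(f,g,x). -/
def simplexA (f g : ℝ → ℂ) (j : ℕ) (x : ℝ) : ℂ :=
  if 0 ≤ x then
    ∫ s in {s : Fin j → ℝ | StrictMono s ∧ ∀ i, s i ∈ Set.Ioo 0 x}, altProd f g j s
  else
    (-1 : ℂ) ^ j *
      ∫ s in {s : Fin j → ℝ | StrictAnti s ∧ ∀ i, s i ∈ Set.Ioo x 0}, altProd f g j s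

/-- The bivariate exponential E_{f,g}. -/
def bivE (f g : ℝ → ℂ) (x : ℝ) : ℂ := 1 + ∑' j : ℕ, simplexA f g (j + 1) x

def bivC (f g : ℝ → ℂ) (x : ℝ) : ℂ := (bivE f g x + bivE (-f) (-g) x) / 2

def bivS (f g : ℝ → ℂ) (x : ℝ) : ℂ := (bivE f g x - bivE (-f) (-g) x) / 2

/-- Locally absolutely continuous complex-valued function on ℝ. -/
def LocAC (F : ℝ → ℂ) : Prop :=
  ∃ F' : ℝ → ℂ, LocallyIntegrable F' volume ∧
    ∀ x : ℝ, F x = F 0 + ∫ t in (0:ℝ)..x, F' t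

end

/-! The numerator `a y₀ + b` and the denominator `c y₀ + d` are locally absolutely continuous,
and so is their quotient, because the denominator is bounded away from zero on every compact
interval. Wherever the linear system holds, the quotient rule turns it into the Riccati equation
for `y`. Since `y` is continuous, `f y² + g y + h` is locally integrable, and the fundamental
theorem of calculus for absolutely continuous functions recovers `y` from this a.e. derivative. -/

open Set

theorem MeasureTheory.LocallyIntegrable.intervalIntegrable {E : Type*} [NormedAddCommGroup E]
    {v : ℝ → E} (hv : LocallyIntegrable v volume) (a b : ℝ) : IntervalIntegrable v volume a b :=
  intervalIntegrable_iff.2 ((hv.integrableOn_isCompact isCompact_uIcc).mono_set uIoc_subset_uIcc)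

namespace AbsolutelyContinuousOnInterval

theorem of_dist_le_mul {X Y : Type*} [PseudoMetricSpace X] [PseudoMetricSpace Y]
    {f : ℝ → X} {g : ℝ → Y} {a b K : ℝ} (hf : AbsolutelyContinuousOnInterval f a b)
    (hgf : ∀ x ∈ uIcc a b, ∀ y ∈ uIcc a b, dist (g x) (g y) ≤ K * dist (f x) (f y)) :
    AbsolutelyContinuousOnInterval g a b := by
  unfold AbsolutelyContinuousOnInterval at hf ⊢
  refine squeeze_zero' (Eventually.of_forall fun _ => Finset.sum_nonneg fun _ _ => dist_nonneg)
    ?_ (by simpa using hf.const_mul K)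
  rw [eventually_inf_principal]
  filter_upwards with ⟨n, I⟩ hnI
  rw [Finset.mul_sum]
  exact Finset.sum_le_sum fun i hi => hgf _ (hnI.1 i hi).1 _ (hnI.1 i hi).2

theorem inv {𝕜 : Type*} [NormedField 𝕜] {f : ℝ → 𝕜} {a b : ℝ}
    (hf : AbsolutelyContinuousOnInterval f a b) (hf0 : ∀ x ∈ uIcc a b, f x ≠ 0) :
    AbsolutelyContinuousOnInterval (fun x => (f x)⁻¹) a b := by
  obtain ⟨z, hz, hmin⟩ := isCompact_uIcc.exists_isMinOn nonempty_uIcc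
    (continuous_norm.comp_continuousOn hf.continuousOn)
  have hm : 0 < ‖f z‖ := norm_pos_iff.2 (hf0 z hz)
  refine hf.of_dist_le_mul (K := (‖f z‖ * ‖f z‖)⁻¹) fun x hx y hy => ?_
  rw [dist_inv_inv₀ (hf0 x hx) (hf0 y hy), div_eq_inv_mul]
  gcongr
  exacts [hmin hx, hmin hy]

end AbsolutelyContinuousOnInterval

theorem MeasureTheory.LocallyIntegrable.absolutelyContinuousOnInterval_primitive {E : Type*}
    [NormedAddCommGroup E] [NormedSpace ℝ E] {v : ℝ → E} (hv : LocallyIntegrable v volume)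
    (c a b : ℝ) : AbsolutelyContinuousOnInterval (fun x => ∫ t in c..x, v t) a b := by
  refine ((hv.intervalIntegrable a b).norm.absolutelyContinuousOnInterval_intervalIntegral
    left_mem_uIcc).of_dist_le_mul (K := 1) fun x _ y _ => ?_
  rw [one_mul, dist_eq_norm, Real.dist_eq,
    integral_interval_sub_left (hv.intervalIntegrable c x) (hv.intervalIntegrable c y),
    integral_interval_sub_left (hv.intervalIntegrable a x).norm (hv.intervalIntegrable a y).norm]
  exact norm_integral_le_abs_integral_norm

namespace AbsolutelyContinuousOnInterval

theorem eq_add_integral_of_ae_hasDerivAt {E : Type*} [NormedAddCommGroup E] [NormedSpace ℝ E]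
    [CompleteSpace E] {F F' : ℝ → E} {a b : ℝ} (hF : AbsolutelyContinuousOnInterval F a b)
    (hF' : LocallyIntegrable F' volume)
    (hderiv : ∀ᵐ x, x ∈ uIcc a b → HasDerivAt F (F' x) x) :
    F b = F a + ∫ x in a..b, F' x := by
  obtain ⟨C, hC⟩ := (hF.fun_sub (hF'.absolutelyContinuousOnInterval_primitive a a b))
    |>.const_of_ae_hasDerivAt_zero (by
      filter_upwards [hderiv, LocallyIntegrable.ae_hasDerivAt_integral hF'] with x hx hI hxab
      simpa using (hx hxab).fun_sub (hI a))
  have hCa := hC a left_mem_uIcc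
  have hCb := hC b right_mem_uIcc
  simp only [integral_same, sub_zero] at hCa
  rw [← hCa] at hCb
  exact sub_eq_iff_eq_add.1 hCb

end AbsolutelyContinuousOnInterval

theorem continuous_of_forall_absolutelyContinuousOnInterval {E : Type*}
    [SeminormedAddCommGroup E] {F : ℝ → E} (hF : ∀ a b, AbsolutelyContinuousOnInterval F a b) :
    Continuous F := by
  refine continuous_iff_continuousAt.2 fun x => ?_
  have hx : uIcc (x - 1) (x + 1) ∈ nhds x := by
    rw [uIcc_of_le (by linarith : x - 1 ≤ x + 1)]
    exact Icc_mem_nhds (by linarith) (by linarith)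
  exact (hF (x - 1) (x + 1)).continuousOn.continuousAt hx

namespace LocAC

theorem absolutelyContinuousOnInterval {F : ℝ → ℂ} (hF : LocAC F) (a b : ℝ) :
    AbsolutelyContinuousOnInterval F a b := by
  obtain ⟨F', hF', hFeq⟩ := hF
  refine (hF'.absolutelyContinuousOnInterval_primitive 0 a b).of_dist_le_mul (K := 1)
    fun x _ y _ => ?_
  rw [one_mul, hFeq x, hFeq y, dist_add_left]

theorem of_absolutelyContinuousOnInterval {F F' : ℝ → ℂ}
    (hF : ∀ x, AbsolutelyContinuousOnInterval F 0 x) (hF' : LocallyIntegrable F' volume)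
    (hderiv : ∀ᵐ x, HasDerivAt F (F' x) x) : LocAC F :=
  ⟨F', hF', fun x =>
    (hF x).eq_add_integral_of_ae_hasDerivAt hF' (hderiv.mono fun _ h _ => h)⟩

end LocAC

theorem HasDerivAt.div_riccati {N D : ℝ → ℂ} {f g h : ℂ} {x : ℝ}
    (hN : HasDerivAt N (g / 2 * N x + h * D x) x) (hD : HasDerivAt D (-f * N x - g / 2 * D x) x)
    (hD0 : D x ≠ 0) :
    HasDerivAt (fun t => N t / D t) (f * (N x / D x) ^ 2 + g * (N x / D x) + h) x := by
  refine (hN.fun_div hD hD0).congr_deriv ?_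
  field_simp
  ring

theorem riccati_standard_solution_general (f g h : ℝ → ℂ)
    (hf : LocallyIntegrable f volume) (hg : LocallyIntegrable g volume)
    (hh : LocallyIntegrable h volume)
    (a b c d : ℝ → ℂ)
    (ha : LocAC a) (hb : LocAC b) (hc : LocAC c) (hd : LocAC d)
    (hM : ∀ᵐ x : ℝ,
      HasDerivAt a (g x / 2 * a x + h x * c x) x ∧
      HasDerivAt b (g x / 2 * b x + h x * d x) x ∧
      HasDerivAt c (-f x * a x - g x / 2 * c x) x ∧
      HasDerivAt d (-f x * b x - g x / 2 * d x) x)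
    (ha0 : a 0 = 1) (hb0 : b 0 = 0) (hc0 : c 0 = 0) (hd0 : d 0 = 1)
    (y₀ : ℂ) (hden : ∀ x : ℝ, c x * y₀ + d x ≠ 0)
    (y : ℝ → ℂ) (hy : y = fun x => (a x * y₀ + b x) / (c x * y₀ + d x)) :
    LocAC y ∧ y 0 = y₀ ∧
    (∀ᵐ x : ℝ, HasDerivAt y (f x * y x ^ 2 + g x * y x + h x) x) := by
  have hlin : ∀ {u v : ℝ → ℂ}, LocAC u → LocAC v → ∀ p q,
      AbsolutelyContinuousOnInterval (fun x => u x * y₀ + v x) p q := fun hu hv p q => by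
    simpa only [smul_eq_mul, mul_comm y₀] using
      ((hu.absolutelyContinuousOnInterval p q).const_smul y₀).fun_add
        (hv.absolutelyContinuousOnInterval p q)
  have hyAC : ∀ p q, AbsolutelyContinuousOnInterval y p q := fun p q => by
    simpa only [hy, smul_eq_mul, div_eq_mul_inv] using
      (hlin ha hb p q).fun_smul ((hlin hc hd p q).inv fun x _ => hden x)
  have hyc : Continuous y := continuous_of_forall_absolutelyContinuousOnInterval hyAC
  have hderiv : ∀ᵐ x : ℝ, HasDerivAt y (f x * y x ^ 2 + g x * y x + h x) x := by
    filter_upwards [hM] with x ⟨hax, hbx, hcx, hdx⟩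
    subst hy
    exact HasDerivAt.div_riccati (((hax.mul_const y₀).add hbx).congr_deriv (by ring))
      (((hcx.mul_const y₀).add hdx).congr_deriv (by ring)) (hden x)
  refine ⟨LocAC.of_absolutelyContinuousOnInterval (fun x => hyAC 0 x) ?_ hderiv,
    by simp [hy, ha0, hb0, hc0, hd0], hderiv⟩
  exact ((hf.mul_continuous (hyc.pow 2)).add (hg.mul_continuous hyc)).add hh

theorem riccati_standard_solution (f g h : ℝ → ℂ)
    (hf : LocallyIntegrable f volume) (hg : LocallyIntegrable g volume)
    (hh : LocallyIntegrable h volume)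
    (a b c d : ℝ → ℂ)
    (ha : LocAC a) (hb : LocAC b) (hc : LocAC c) (hd : LocAC d)
    (hM : ∀ᵐ x : ℝ,
      HasDerivAt a (g x / 2 * a x + h x * c x) x ∧
      HasDerivAt b (g x / 2 * b x + h x * d x) x ∧
      HasDerivAt c (-f x * a x - g x / 2 * c x) x ∧
      HasDerivAt d (-f x * b x - g x / 2 * d x) x)
    (ha0 : a 0 = 1) (hb0 : b 0 = 0) (hc0 : c 0 = 0) (hd0 : d 0 = 1)
    (hdet : ∀ x : ℝ, a x * d x - b x * c x = 1)
    (y₀ : ℂ) (hden : ∀ x : ℝ, c x * y₀ + d x ≠ 0)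
    (y : ℝ → ℂ) (hy : y = fun x => (a x * y₀ + b x) / (c x * y₀ + d x)) :
    LocAC y ∧ y 0 = y₀ ∧
    (∀ᵐ x : ℝ, HasDerivAt y (f x * y x ^ 2 + g x * y x + h x) x) :=
  riccati_standard_solution_general f g h hf hg hh a b c d ha hb hc hd hM ha0 hb0 hc0 hd0 y₀ hden y
    hy
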